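/- arXiv:2305.00836 — 5 statements merged into one kernel-verified Lean document; each statement's English description precedes it below -/
import Mathlib

section
/- Let G be a group, K a field, n a positive integer, and ρ : G → GL(n, K) a matrix representation. The set of field automorphisms γ of K for which there exist a character χ : G → Kˣ and a matrix M ∈ GL(n, K) such that for every g ∈ G, applying γ entrywise to ρ(g) equals χ(g) • (M * ρ(g) * M⁻¹), is a subgroup of the group of field automorphisms of K. -/
/-!
Write the twisting condition inside `GL ι R` as `γ(ρ g) = scalar (χ g) * M (ρ g) M⁻¹`. Applying a
ring automorphism entrywise is a group endomorphism of `GL ι R` carrying scalar matrices to scalar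
matrices, and scalar matrices are central. Hence composing two twists, `(γ₁, χ₁, M₁)` after
`(γ₂, χ₂, M₂)`, gives the twist `(γ₁γ₂, (γ₁ ∘ χ₂) χ₁, γ₁(M₂) M₁)`, and applying `γ⁻¹` to a twist and
solving for `γ⁻¹(ρ g)` gives the twist `(γ⁻¹, (γ⁻¹ ∘ χ)⁻¹, γ⁻¹(M)⁻¹)`.
-/

open Matrix

namespace Matrix.GeneralLinearGroup

variable {G R ι : Type*} [Group G] [CommRing R] [Fintype ι] [DecidableEq ι]

lemma coe_scalar_mul (c : Rˣ) (A : GL ι R) :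
    ((scalar ι c * A : GL ι R) : Matrix ι ι R) = (c : R) • (A : Matrix ι ι R) := by
  rw [Units.val_mul, coe_scalar, smul_eq_diagonal_mul]
  rfl

lemma map_ringAut_one_apply (A : GL ι R) : map ((1 : R ≃+* R) : R →+* R) A = A :=
  rfl

lemma map_ringAut_mul_apply (γ₁ γ₂ : R ≃+* R) (A : GL ι R) :
    map ((γ₁ * γ₂ : R ≃+* R) : R →+* R) A = map (γ₁ : R →+* R) (map (γ₂ : R →+* R) A) :=
  rfl

def IsExtraTwist (ρ : G →* GL ι R) (γ : R ≃+* R) (χ : G →* Rˣ) (M : GL ι R) : Prop :=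
  ∀ g, map (γ : R →+* R) (ρ g) = scalar ι (χ g) * (M * ρ g * M⁻¹)

variable {ρ : G →* GL ι R}

lemma isExtraTwist_iff {γ : R ≃+* R} {χ : G →* Rˣ} {M : GL ι R} :
    IsExtraTwist ρ γ χ M ↔ ∀ g, (ρ g : Matrix ι ι R).map γ
      = (χ g : R) • ((M * ρ g * M⁻¹ : GL ι R) : Matrix ι ι R) := by
  simp only [IsExtraTwist, Units.ext_iff, coe_scalar_mul]
  rfl

lemma isExtraTwist_one : IsExtraTwist ρ 1 1 1 := fun g => by
  rw [map_ringAut_one_apply, MonoidHom.one_apply, map_one, one_mul, inv_one, mul_one, one_mul]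

lemma IsExtraTwist.mul {γ₁ γ₂ : R ≃+* R} {χ₁ χ₂ : G →* Rˣ} {M₁ M₂ : GL ι R}
    (h₁ : IsExtraTwist ρ γ₁ χ₁ M₁) (h₂ : IsExtraTwist ρ γ₂ χ₂ M₂) :
    IsExtraTwist ρ (γ₁ * γ₂) ((Units.map (γ₁ : R →* R)).comp χ₂ * χ₁)
      (map (γ₁ : R →+* R) M₂ * M₁) := fun g => by
  set N := map (γ₁ : R →+* R) M₂
  calc map ((γ₁ * γ₂ : R ≃+* R) : R →+* R) (ρ g)
      = scalar ι (Units.map (γ₁ : R →* R) (χ₂ g)) *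
          (N * (scalar ι (χ₁ g) * (M₁ * ρ g * M₁⁻¹)) * N⁻¹) := by
        rw [map_ringAut_mul_apply, h₂ g, map_mul, map_scalar, map_mul, map_mul, map_inv, h₁ g]
        rfl
    _ = _ := by
        rw [← mul_assoc N, ← scalar_commute, MonoidHom.mul_apply, MonoidHom.comp_apply, map_mul]
        group

lemma IsExtraTwist.inv {γ : R ≃+* R} {χ : G →* Rˣ} {M : GL ι R}
    (h : IsExtraTwist ρ γ χ M) :
    IsExtraTwist ρ γ⁻¹ ((Units.map ((γ⁻¹ : R ≃+* R) : R →* R)).comp χ)⁻¹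
      (map ((γ⁻¹ : R ≃+* R) : R →+* R) M)⁻¹ := fun g => by
  set N := map ((γ⁻¹ : R ≃+* R) : R →+* R) M
  set X := map ((γ⁻¹ : R ≃+* R) : R →+* R) (ρ g)
  set z := scalar ι (Units.map ((γ⁻¹ : R ≃+* R) : R →* R) (χ g))
  have hρ : ρ g = z * (N * X * N⁻¹) := by
    rw [← map_ringAut_one_apply (ρ g), ← inv_mul_cancel γ, map_ringAut_mul_apply, h g,
      map_mul, map_scalar, map_mul, map_mul, map_inv]
    rfl
  have hz : N⁻¹ * z = z * N⁻¹ := (scalar_commute _ _).symm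
  calc X = z⁻¹ * (N⁻¹ * (z * (N * X * N⁻¹)) * N) := by
        rw [← mul_assoc N⁻¹, hz]
        group
    _ = _ := by
        rw [← hρ, inv_inv, MonoidHom.inv_apply, map_inv]
        rfl

variable (ρ) in
def extraTwists : Subgroup (R ≃+* R) where
  carrier := {γ | ∃ χ M, IsExtraTwist ρ γ χ M}
  one_mem' := ⟨1, 1, isExtraTwist_one⟩
  mul_mem' := fun ⟨_, _, h₁⟩ ⟨_, _, h₂⟩ => ⟨_, _, h₁.mul h₂⟩
  inv_mem' := fun ⟨_, _, h⟩ => ⟨_, _, h.inv⟩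

end Matrix.GeneralLinearGroup

open Matrix.GeneralLinearGroup in
theorem extraTwists_form_subgroup_general (G : Type*) [Group G] (K : Type*) [Field K]
    (n : ℕ) (ρ : G →* GL (Fin n) K) :
    ∃ H : Subgroup (K ≃+* K),
      ∀ γ : K ≃+* K, γ ∈ H ↔
        ∃ (χ : G →* Kˣ) (M : GL (Fin n) K), ∀ g : G,
          ((ρ g : Matrix (Fin n) (Fin n) K)).map γ
            = (χ g : K) • ((M * ρ g * M⁻¹ : GL (Fin n) K) : Matrix (Fin n) (Fin n) K) :=
  ⟨extraTwists ρ, fun _ => exists₂_congr fun _ _ => isExtraTwist_iff⟩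

/-- The extra twists of a matrix representation `ρ : G → GL(n, K)` — i.e. the field
automorphisms `γ` of `K` for which there exist a character `χ : G → Kˣ` and
`M ∈ GL(n, K)` with `(ρ g).map γ = χ g • (M * ρ g * M⁻¹)` for all `g` — form a subgroup
of the group of field automorphisms of `K`. -/
theorem extraTwists_form_subgroup (G : Type*) [Group G] (K : Type*) [Field K]
    (n : ℕ) (hn : 0 < n) (ρ : G →* GL (Fin n) K) :
    ∃ H : Subgroup (K ≃+* K),
      ∀ γ : K ≃+* K, γ ∈ H ↔
        ∃ (χ : G →* Kˣ) (M : GL (Fin n) K), ∀ g : G,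
          ((ρ g : Matrix (Fin n) (Fin n) K)).map γ
            = (χ g : K) • ((M * ρ g * M⁻¹ : GL (Fin n) K) : Matrix (Fin n) (Fin n) K) :=
  extraTwists_form_subgroup_general G K n ρ
end

section
/- Let E/F be a finite Galois extension of fields with Galois group Γ, and let G be a group. Suppose that for each γ ∈ Γ we are given a character χ_γ : G → Eˣ, and that the cocycle relation χ_{γδ}(g) = χ_γ(g) · γ(χ_δ(g)) holds for all γ, δ ∈ Γ and g ∈ G. Then there exists a function α : G → Eˣ such that γ(α(g)) / α(g) = χ_γ(g) for all γ ∈ Γ and g ∈ G, and the induced map from G to the quotient group Eˣ / (image of Fˣ in Eˣ), sending g to the coset of α(g), is a group homomorphism. -/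
/-! For each `g`, the family `γ ↦ χ_γ(g)` is a 1-cocycle, so Hilbert 90 gives `α(g)` with
coboundary `χ(g)`. Since each `χ_γ` is a character, the defect `α(g₁g₂) / (α(g₁) α(g₂))` has
trivial coboundary, i.e. is Galois-fixed, hence lies in `Fˣ`. -/

theorem exists_units_map_div_eq_of_cocycle {F E : Type*} [Field F] [Field E] [Algebra F E]
    [FiniteDimensional F E] (c : (E ≃ₐ[F] E) → Eˣ)
    (hc : ∀ γ δ : E ≃ₐ[F] E, c (γ * δ) = c γ * Units.map (γ : E →* E) (c δ)) :
    ∃ β : Eˣ, ∀ γ : E ≃ₐ[F] E, Units.map (γ : E →* E) β / β = c γ :=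
  groupCohomology.isMulCoboundary₁_of_isMulCocycle₁_of_aut_to_units c fun γ δ => by
    rw [AlgEquiv.smul_units_def, hc, mul_comm]

theorem Units.mem_range_map_algebraMap_of_forall_map_eq {F E : Type*} [Field F] [Field E]
    [Algebra F E] [IsGalois F E] {u : Eˣ} (hu : ∀ γ : E ≃ₐ[F] E, Units.map (γ : E →* E) u = u) :
    u ∈ (Units.map (algebraMap F E : F →* E)).range := by
  obtain ⟨x, hx⟩ := (InfiniteGalois.mem_range_algebraMap_iff_fixed (u : E)).mpr
    fun γ => congrArg Units.val (hu γ)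
  have hx0 : x ≠ 0 := by
    rintro rfl
    exact u.ne_zero (by rw [← hx, map_zero])
  exact ⟨Units.mk0 x hx0, Units.ext hx⟩

theorem MonoidHom.map_div_mul_eq_self {M : Type*} [CommGroup M] (f : M →* M) {a b c : M}
    (h : f c / c = f a / a * (f b / b)) : f (c / (a * b)) = c / (a * b) := by
  have hφ : (f / MonoidHom.id M) (c / (a * b)) = 1 := by
    rw [map_div, map_mul, MonoidHom.div_apply, MonoidHom.div_apply, MonoidHom.div_apply]
    exact div_eq_one.mpr h
  exact div_eq_one.mp hφ

/-- Hilbert 90 applied to a cocycle family of characters: given a finite Galois extension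
`E/F` with Galois group `Γ` and characters `χ_γ : G → Eˣ` satisfying the cocycle relation
`χ_{γδ}(g) = χ_γ(g) · γ(χ_δ(g))`, there is `α : G → Eˣ` with `γ(α(g))/α(g) = χ_γ(g)` for
all `γ, g`, and `g ↦ α(g) mod Fˣ` is a homomorphism `G → Eˣ/Fˣ`. -/
theorem hilbert90_cocycle_characters (F E : Type*) [Field F] [Field E] [Algebra F E]
    [FiniteDimensional F E] [IsGalois F E] (G : Type*) [Group G]
    (χ : (E ≃ₐ[F] E) → (G →* Eˣ))
    (hcoc : ∀ (γ δ : E ≃ₐ[F] E) (g : G),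
      χ (γ * δ) g = χ γ g * Units.map (γ : E →* E) (χ δ g)) :
    ∃ α : G → Eˣ,
      (∀ (γ : E ≃ₐ[F] E) (g : G), Units.map (γ : E →* E) (α g) / α g = χ γ g) ∧
      (∀ g₁ g₂ : G,
        (QuotientGroup.mk (α (g₁ * g₂)) :
            Eˣ ⧸ (Units.map (algebraMap F E : F →* E)).range)
          = QuotientGroup.mk (α g₁) * QuotientGroup.mk (α g₂)) := by
  choose α hα using fun g =>
    exists_units_map_div_eq_of_cocycle (fun γ => χ γ g) fun γ δ => hcoc γ δ g
  refine ⟨α, fun γ g => hα g γ, fun g₁ g₂ => ?_⟩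
  rw [← QuotientGroup.mk_mul, QuotientGroup.eq_iff_div_mem]
  refine Units.mem_range_map_algebraMap_of_forall_map_eq fun γ =>
    MonoidHom.map_div_mul_eq_self _ ?_
  rw [hα, hα, hα, map_mul]
end

section
/- Let G be a group, K a field, n a positive integer, and ρ : G → GL(n, K) a matrix representation. Suppose (γ, ε, M) is an extra twist of ρ, i.e., for all g ∈ G the entrywise application of γ to ρ(g) equals ε(g) • (M * ρ(g) * M⁻¹). Then for every g ∈ G, γ( tr(ρ(g)) · tr(ρ(g)⁻¹) ) = tr(ρ(g)) · tr(ρ(g)⁻¹); that is, the trace of the adjoint action Tr(Ad(ρ(g))) = tr(ρ(g)) · tr(ρ(g)⁻¹) is fixed by every extra-twist automorphism γ. -/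
open Matrix

lemma trace_map_aux {K : Type*} [Field K] {n : ℕ} (γ : K ≃+* K)
    (A : Matrix (Fin n) (Fin n) K) : trace (A.map γ) = γ (trace A) := by
  simp [Matrix.trace, Matrix.diag, map_sum]

lemma gamma_trace {G : Type*} [Group G] {K : Type*} [Field K] {n : ℕ}
    (ρ : G →* GL (Fin n) K) (γ : K ≃+* K) (ε : G →* Kˣ) (M : GL (Fin n) K)
    (h : ∀ g : G, ((ρ g : Matrix (Fin n) (Fin n) K)).map γ
      = (ε g : K) • ((M * ρ g * M⁻¹ : GL (Fin n) K) : Matrix (Fin n) (Fin n) K)) (g : G) :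
    γ (trace (ρ g : Matrix (Fin n) (Fin n) K))
      = (ε g : K) * trace (ρ g : Matrix (Fin n) (Fin n) K) := by
  have := congrArg Matrix.trace (h g)
  rw [trace_map_aux] at this
  rw [this, trace_smul, smul_eq_mul]
  congr 1
  have : ((M * ρ g * M⁻¹ : GL (Fin n) K) : Matrix (Fin n) (Fin n) K)
      = (M : Matrix (Fin n) (Fin n) K) * (ρ g : Matrix (Fin n) (Fin n) K)
        * ((M⁻¹ : GL (Fin n) K) : Matrix (Fin n) (Fin n) K) := by
    simp [Units.val_mul]
  rw [this]
  exact Matrix.trace_units_conj M _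

/-- If `(γ, ε, M)` is an extra twist of `ρ : G → GL(n, K)`, then the trace of the adjoint
action `Tr(Ad(ρ(g))) = tr(ρ(g)) · tr(ρ(g)⁻¹)` is fixed by `γ` for every `g ∈ G`. -/
theorem trace_adjoint_fixed_by_extraTwist (G : Type*) [Group G] (K : Type*) [Field K]
    (n : ℕ) (hn : 0 < n) (ρ : G →* GL (Fin n) K)
    (γ : K ≃+* K) (ε : G →* Kˣ) (M : GL (Fin n) K)
    (h : ∀ g : G, ((ρ g : Matrix (Fin n) (Fin n) K)).map γ
      = (ε g : K) • ((M * ρ g * M⁻¹ : GL (Fin n) K) : Matrix (Fin n) (Fin n) K)) :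
    ∀ g : G,
      γ (Matrix.trace (ρ g : Matrix (Fin n) (Fin n) K) *
          Matrix.trace (((ρ g)⁻¹ : GL (Fin n) K) : Matrix (Fin n) (Fin n) K))
        = Matrix.trace (ρ g : Matrix (Fin n) (Fin n) K) *
            Matrix.trace (((ρ g)⁻¹ : GL (Fin n) K) : Matrix (Fin n) (Fin n) K) := by
  intro g
  have hinv : ((ρ g)⁻¹ : GL (Fin n) K) = ρ g⁻¹ := by rw [map_inv]
  rw [hinv, _root_.map_mul, gamma_trace ρ γ ε M h g, gamma_trace ρ γ ε M h g⁻¹]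
  have : (ε g : K) * (ε g⁻¹ : K) = 1 := by
    rw [← Units.val_mul, ← _root_.map_mul, mul_inv_cancel]; simp
  calc (ε g : K) * trace (ρ g : Matrix (Fin n) (Fin n) K) *
        ((ε g⁻¹ : K) * trace (ρ g⁻¹ : Matrix (Fin n) (Fin n) K))
      = ((ε g : K) * (ε g⁻¹ : K)) * (trace (ρ g : Matrix (Fin n) (Fin n) K) *
        trace (ρ g⁻¹ : Matrix (Fin n) (Fin n) K)) := by ring
    _ = _ := by rw [this, one_mul]
end

section
/- Let G be a group, K a field, n a positive integer, and ρ : G → GL(n, K) a matrix representation. The set of characters ε : G → Kˣ for which there exists M ∈ GL(n, K) with ρ(g) = ε(g) • (M * ρ(g) * M⁻¹) for all g ∈ G, forms a subgroup of the group of all characters G → Kˣ (under pointwise multiplication). -/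
open Matrix

private lemma selfTwist_aux {K : Type*} [Field K] {n : ℕ} (a : K)
    (m mi r : Matrix (Fin n) (Fin n) K) (h1 : mi * m = 1) (h2 : m * mi = 1) :
    r = a • (m * r * mi) ↔ mi * r * m = a • r := by
  constructor
  · intro h
    calc mi * r * m = mi * (a • (m * r * mi)) * m := by rw [← h]
      _ = a • (mi * m * (r * (mi * m))) := by
          simp only [Matrix.mul_smul, Matrix.smul_mul, mul_assoc]
      _ = a • r := by rw [h1]; simp
  · intro h
    calc r = m * mi * (r * (m * mi)) := by rw [h2]; simp
      _ = m * (mi * r * m) * mi := by simp only [mul_assoc]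
      _ = m * (a • r) * mi := by rw [h]
      _ = a • (m * r * mi) := by
          simp only [Matrix.mul_smul, Matrix.smul_mul]

/-- The self-twist characters of a matrix representation `ρ : G → GL(n, K)` — i.e. the
characters `ε : G → Kˣ` for which there exists `M ∈ GL(n, K)` with
`ρ(g) = ε(g) • (M * ρ(g) * M⁻¹)` for all `g` — form a subgroup of the group of all
characters `G → Kˣ` under pointwise multiplication. -/
theorem selfTwists_form_subgroup (G : Type*) [Group G] (K : Type*) [Field K]
    (n : ℕ) (hn : 0 < n) (ρ : G →* GL (Fin n) K) :
    ∃ H : Subgroup (G →* Kˣ),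
      ∀ ε : G →* Kˣ, ε ∈ H ↔
        ∃ M : GL (Fin n) K, ∀ g : G, (ρ g : Matrix (Fin n) (Fin n) K)
          = (ε g : K) • ((M * ρ g * M⁻¹ : GL (Fin n) K) : Matrix (Fin n) (Fin n) K) := by
  have val3 : ∀ (A B C : GL (Fin n) K),
      ((A * B * C : GL (Fin n) K) : Matrix (Fin n) (Fin n) K)
        = (A : Matrix (Fin n) (Fin n) K) * (B : Matrix (Fin n) (Fin n) K)
          * (C : Matrix (Fin n) (Fin n) K) := fun A B C => by
    rw [Units.val_mul, Units.val_mul]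
  have key : ∀ (ε : G →* Kˣ) (M : GL (Fin n) K) (g : G),
      ((ρ g : Matrix (Fin n) (Fin n) K)
        = (ε g : K) • ((M * ρ g * M⁻¹ : GL (Fin n) K) : Matrix (Fin n) (Fin n) K))
      ↔ ((M⁻¹ : GL (Fin n) K) : Matrix (Fin n) (Fin n) K) * (ρ g : Matrix (Fin n) (Fin n) K)
          * (M : Matrix (Fin n) (Fin n) K) = (ε g : K) • (ρ g : Matrix (Fin n) (Fin n) K) := by
    intro ε M g
    rw [val3]
    exact selfTwist_aux (ε g : K) (M : Matrix (Fin n) (Fin n) K)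
      ((M⁻¹ : GL (Fin n) K) : Matrix (Fin n) (Fin n) K) (ρ g : Matrix (Fin n) (Fin n) K)
      (by rw [← Units.val_mul, inv_mul_cancel]; rfl)
      (by rw [← Units.val_mul, mul_inv_cancel]; rfl)
  refine ⟨{ carrier := {ε | ∃ M : GL (Fin n) K, ∀ g : G, (ρ g : Matrix (Fin n) (Fin n) K)
          = (ε g : K) • ((M * ρ g * M⁻¹ : GL (Fin n) K) : Matrix (Fin n) (Fin n) K)}
          , one_mem' := ⟨1, fun g => by simp⟩
          , mul_mem' := ?_
          , inv_mem' := ?_ }, fun ε => Iff.rfl⟩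
  · rintro ε ε' ⟨M, hM⟩ ⟨N, hN⟩
    refine ⟨M * N, fun g => (key (ε * ε') (M * N) g).mpr ?_⟩
    have hM' := (key ε M g).mp (hM g)
    have hN' := (key ε' N g).mp (hN g)
    have e1 : (((M * N)⁻¹ : GL (Fin n) K) : Matrix (Fin n) (Fin n) K)
        = ((N⁻¹ : GL (Fin n) K) : Matrix (Fin n) (Fin n) K)
          * ((M⁻¹ : GL (Fin n) K) : Matrix (Fin n) (Fin n) K) := by
      rw [_root_.mul_inv_rev, Units.val_mul]
    rw [e1, Units.val_mul]
    calc ((N⁻¹ : GL (Fin n) K) : Matrix (Fin n) (Fin n) K)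
            * ((M⁻¹ : GL (Fin n) K) : Matrix (Fin n) (Fin n) K)
            * (ρ g : Matrix (Fin n) (Fin n) K)
            * ((M : Matrix (Fin n) (Fin n) K) * (N : Matrix (Fin n) (Fin n) K))
        = ((N⁻¹ : GL (Fin n) K) : Matrix (Fin n) (Fin n) K)
            * (((M⁻¹ : GL (Fin n) K) : Matrix (Fin n) (Fin n) K)
                * (ρ g : Matrix (Fin n) (Fin n) K) * (M : Matrix (Fin n) (Fin n) K))
            * (N : Matrix (Fin n) (Fin n) K) := by simp only [mul_assoc]
      _ = ((N⁻¹ : GL (Fin n) K) : Matrix (Fin n) (Fin n) K)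
            * ((ε g : K) • (ρ g : Matrix (Fin n) (Fin n) K))
            * (N : Matrix (Fin n) (Fin n) K) := by rw [hM']
      _ = (ε g : K) • (((N⁻¹ : GL (Fin n) K) : Matrix (Fin n) (Fin n) K)
            * (ρ g : Matrix (Fin n) (Fin n) K) * (N : Matrix (Fin n) (Fin n) K)) := by
          simp only [Matrix.mul_smul, Matrix.smul_mul]
      _ = (ε g : K) • ((ε' g : K) • (ρ g : Matrix (Fin n) (Fin n) K)) := by rw [hN']
      _ = (((ε * ε') g : K)) • (ρ g : Matrix (Fin n) (Fin n) K) := by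
          rw [smul_smul]; simp
  · rintro ε ⟨M, hM⟩
    refine ⟨M⁻¹, fun g => (key ε⁻¹ M⁻¹ g).mpr ?_⟩
    have hval : ((ε⁻¹ g : Kˣ) : K) = (((ε g)⁻¹ : Kˣ) : K) := by simp
    have e2 : (((M⁻¹)⁻¹ : GL (Fin n) K) : Matrix (Fin n) (Fin n) K)
        = (M : Matrix (Fin n) (Fin n) K) := by rw [inv_inv]
    rw [hval, e2]
    have hg := hM g
    rw [val3] at hg
    calc (M : Matrix (Fin n) (Fin n) K) * (ρ g : Matrix (Fin n) (Fin n) K)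
            * ((M⁻¹ : GL (Fin n) K) : Matrix (Fin n) (Fin n) K)
        = (((ε g)⁻¹ : Kˣ) : K) • ((ε g : K) • ((M : Matrix (Fin n) (Fin n) K)
            * (ρ g : Matrix (Fin n) (Fin n) K)
            * ((M⁻¹ : GL (Fin n) K) : Matrix (Fin n) (Fin n) K))) := by
          rw [smul_smul, Units.inv_mul, one_smul]
      _ = (((ε g)⁻¹ : Kˣ) : K) • (ρ g : Matrix (Fin n) (Fin n) K) := by rw [← hg]
end

section
/- Let K be an algebraically closed field, n a positive integer, G a group, and H a normal subgroup of G of finite index. Let ρ, ρ' : G → GL(n, K) be matrix representations such that the restriction of ρ to H is irreducible (the only K-subspaces W of K^n with ρ(h) · W ⊆ W for all h ∈ H are 0 and K^n), and suppose there exists T ∈ GL(n, K) with T * ρ(h) = ρ'(h) * T for all h ∈ H. Then there exists a character φ : G → Kˣ that is trivial on H (and hence satisfies φ(g)^{[G:H]} = 1 for all g ∈ G) such that T * ρ(g) * T⁻¹ = φ(g) • ρ'(g) for every g ∈ G. -/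
/-!
Put `τ(g) = T⁻¹ ρ'(g) T`, so that `ρ = τ` on `H`. As `H` is normal, `τ(g)⁻¹ ρ(g)` commutes with
`ρ(H)`, hence is a scalar `φ(g)` by Schur's lemma. The scalar is unique, which makes `φ`
multiplicative; it is `1` on `H`, and `g ^ [G:H] ∈ H` gives `φ(g) ^ [G:H] = 1`.
-/

open Matrix

theorem Module.End.exists_eq_algebraMap_of_forall_commute {K V : Type*} [Field K] [IsAlgClosed K]
    [AddCommGroup V] [Module K V] [FiniteDimensional K V] [Nontrivial V] {S : Set (Module.End K V)}
    (hS : ∀ W : Submodule K V, (∀ s ∈ S, ∀ v ∈ W, s v ∈ W) → W = ⊥ ∨ W = ⊤)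
    {f : Module.End K V} (hf : ∀ s ∈ S, Commute f s) : ∃ c : K, f = algebraMap K _ c := by
  obtain ⟨c, hc⟩ := f.exists_eigenvalue
  have h_top : f.eigenspace c = ⊤ :=
    (hS _ fun s hs _ hv ↦ f.mapsTo_genEigenspace_of_comm (hf s hs) c 1 hv).resolve_left hc
  exact ⟨c, LinearMap.ext fun v ↦ mem_eigenspace_iff.mp (h_top ▸ Submodule.mem_top)⟩

theorem Matrix.exists_eq_scalar_of_forall_commute {K n : Type*} [Field K] [IsAlgClosed K]
    [Fintype n] [DecidableEq n] [Nonempty n] {S : Set (Matrix n n K)}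
    (hS : ∀ W : Submodule K (n → K), (∀ A ∈ S, ∀ v ∈ W, A *ᵥ v ∈ W) → W = ⊥ ∨ W = ⊤)
    {B : Matrix n n K} (hB : ∀ A ∈ S, Commute B A) : ∃ c : K, B = scalar n c := by
  obtain ⟨c, hc⟩ := Module.End.exists_eq_algebraMap_of_forall_commute
    (S := toLinAlgEquiv' '' S) (f := toLinAlgEquiv' B)
    (by rintro W hW; exact hS W fun A hA ↦ hW _ ⟨A, hA, rfl⟩)
    (by rintro _ ⟨A, hA, rfl⟩; exact (hB A hA).map toLinAlgEquiv')
  exact ⟨c, toLinAlgEquiv'.injective (by rw [hc, ← toLinAlgEquiv'.commutes c]; rfl)⟩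

theorem Matrix.GeneralLinearGroup.exists_coe_eq_smul_of_eqOn_normal {K n G : Type*} [Field K]
    [IsAlgClosed K] [Fintype n] [DecidableEq n] [Nonempty n] [Group G] {H : Subgroup G}
    [hH : H.Normal] {ρ τ : G →* GL n K}
    (hirr : ∀ W : Submodule K (n → K),
      (∀ h ∈ H, ∀ v ∈ W, (ρ h : Matrix n n K) *ᵥ v ∈ W) → W = ⊥ ∨ W = ⊤)
    (heq : Set.EqOn ρ τ H) (g : G) :
    ∃ c : K, (ρ g : Matrix n n K) = c • (τ g : Matrix n n K) := by
  have hcomm : ∀ h ∈ H, Commute ((τ g)⁻¹ * ρ g) (ρ h) := fun h hh ↦ by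
    have hconj : ρ (g * h * g⁻¹) = τ g * ρ h * (τ g)⁻¹ := by
      rw [heq (hH.conj_mem h hh g), heq hh]; simp
    calc (τ g)⁻¹ * ρ g * ρ h = (τ g)⁻¹ * ρ (g * h * g⁻¹) * ρ g := by simp [mul_assoc]
      _ = ρ h * ((τ g)⁻¹ * ρ g) := by rw [hconj]; group
  obtain ⟨c, hc⟩ := exists_eq_scalar_of_forall_commute (S := (fun h ↦ (ρ h : Matrix n n K)) '' H)
    (B := ((τ g)⁻¹ * ρ g : GL n K))
    (by rintro W hW; exact hirr W fun h hh ↦ hW _ ⟨h, hh, rfl⟩)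
    (by rintro _ ⟨h, hh, rfl⟩; exact (hcomm h hh).map (Units.coeHom _))
  refine ⟨c, ?_⟩
  calc (ρ g : Matrix n n K) = τ g * ((τ g)⁻¹ * ρ g : GL n K) := by simp
    _ = c • (τ g : Matrix n n K) := by rw [hc, scalar_apply, smul_eq_mul_diagonal]

theorem Matrix.GeneralLinearGroup.exists_monoidHom_coe_eq_smul {K n G : Type*} [Field K]
    [Fintype n] [DecidableEq n] [Nonempty n] [Group G] {σ τ : G →* GL n K}
    (h : ∀ g, ∃ c : K, (σ g : Matrix n n K) = c • (τ g : Matrix n n K)) :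
    ∃ φ : G →* Kˣ, ∀ g, (σ g : Matrix n n K) = (φ g : K) • (τ g : Matrix n n K) := by
  choose c hc using h
  have hc0 (g : G) : c g ≠ 0 := fun h0 ↦ (σ g).ne_zero (by rw [hc, h0, zero_smul])
  have hc_unique (g : G) {d : K} (hd : (σ g : Matrix n n K) = d • (τ g : Matrix n n K)) :
      d = c g :=
    smul_left_injective K (τ g).ne_zero (hd.symm.trans (hc g))
  refine ⟨MonoidHom.mk' (fun g ↦ Units.mk0 (c g) (hc0 g)) fun a b ↦ Units.ext ?_, hc⟩
  refine (hc_unique _ ?_).symm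
  simp only [map_mul, Units.val_mul, Units.val_mk0, hc, smul_mul_smul_comm]

theorem conjugate_on_finite_index_subgroup_iff_twist_general (K : Type*) [Field K] [IsAlgClosed K]
    (n : ℕ) (hn : 0 < n) (G : Type*) [Group G]
    (H : Subgroup G) [H.Normal]
    (ρ ρ' : G →* GL (Fin n) K)
    (hirr : ∀ W : Submodule K (Fin n → K),
      (∀ h ∈ H, ∀ v ∈ W, (ρ h : Matrix (Fin n) (Fin n) K) *ᵥ v ∈ W) → W = ⊥ ∨ W = ⊤)
    (T : GL (Fin n) K)
    (hT : ∀ h ∈ H, T * ρ h = ρ' h * T) :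
    ∃ φ : G →* Kˣ,
      (∀ h ∈ H, φ h = 1) ∧
      (∀ g : G, φ g ^ H.index = 1) ∧
      (∀ g : G, ((T * ρ g * T⁻¹ : GL (Fin n) K) : Matrix (Fin n) (Fin n) K)
        = (φ g : K) • (ρ' g : Matrix (Fin n) (Fin n) K)) := by
  have : Nonempty (Fin n) := Fin.pos_iff_nonempty.mp hn
  let τ : G →* GL (Fin n) K := (MulAut.conj T⁻¹).toMonoidHom.comp ρ'
  have hτ : Set.EqOn ρ τ H := fun h hh ↦ by
    simp [τ, mul_assoc, ← hT h hh]
  obtain ⟨φ, hφ⟩ := GeneralLinearGroup.exists_monoidHom_coe_eq_smul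
    (GeneralLinearGroup.exists_coe_eq_smul_of_eqOn_normal hirr hτ)
  have hφH (h : G) (hh : h ∈ H) : φ h = 1 :=
    Units.ext <| smul_left_injective K (τ h).ne_zero <| by
      simpa [hτ hh] using (hφ h).symm
  refine ⟨φ, hφH, fun g ↦ by rw [← map_pow, hφH _ (H.pow_index_mem g)], fun g ↦ ?_⟩
  rw [Units.val_mul, Units.val_mul, hφ g]
  simp [τ, mul_assoc]

/-- If two representations `ρ, ρ' : G → GL(n, K)` over an algebraically closed field
become isomorphic (via `T`) on a normal subgroup `H` of finite index on which `ρ` is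
irreducible, then they differ by a character `φ : G → Kˣ` trivial on `H` (hence with
`φ(g)^[G:H] = 1`): `T * ρ(g) * T⁻¹ = φ(g) • ρ'(g)` for all `g`. -/
theorem conjugate_on_finite_index_subgroup_iff_twist (K : Type*) [Field K] [IsAlgClosed K]
    (n : ℕ) (hn : 0 < n) (G : Type*) [Group G]
    (H : Subgroup G) [H.Normal] [H.FiniteIndex]
    (ρ ρ' : G →* GL (Fin n) K)
    (hirr : ∀ W : Submodule K (Fin n → K),
      (∀ h ∈ H, ∀ v ∈ W, (ρ h : Matrix (Fin n) (Fin n) K) *ᵥ v ∈ W) → W = ⊥ ∨ W = ⊤)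
    (T : GL (Fin n) K)
    (hT : ∀ h ∈ H, T * ρ h = ρ' h * T) :
    ∃ φ : G →* Kˣ,
      (∀ h ∈ H, φ h = 1) ∧
      (∀ g : G, φ g ^ H.index = 1) ∧
      (∀ g : G, ((T * ρ g * T⁻¹ : GL (Fin n) K) : Matrix (Fin n) (Fin n) K)
        = (φ g : K) • (ρ' g : Matrix (Fin n) (Fin n) K)) :=
  conjugate_on_finite_index_subgroup_iff_twist_general K n hn G H ρ ρ' hirr T hT
end
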